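/- The closure of a general KCM coincides with the bootstrap closure of the infection pattern: for every η ∈ S_L and boundary condition ω, {η}_L^ω equals the smallest set A ⊆ L with the property that for every y ∈ L, if there exists U ∈ U_y with U ⊆ {z ∈ ℤ : (η·ω)_z ∈ I_z} ∪ A, then y ∈ A. -/

import Mathlib

open scoped Classical

namespace KCM

/-- A full configuration assigns a state to every site of `ℤ`.  The boundary
condition is the restriction of a configuration outside the volume. -/
abbrev Config (S : ℤ → Type) : Type := ∀ x : ℤ, S x

variable {S : ℤ → Type}

/-- The constraint at site `x` is satisfied in configuration `η`: some update
rule of `x` has all its sites infected. -/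
def Constraint (I : ∀ x : ℤ, Set (S x)) (U : ℤ → Finset (Finset ℤ)) (x : ℤ)
    (η : Config S) : Prop :=
  ∃ u ∈ U x, ∀ y ∈ u, η y ∈ I y

/-- A legal transition of the KCM on volume `L`: the two configurations agree
off a single site `x ∈ L` whose constraint is satisfied. -/
def Step (I : ∀ x : ℤ, Set (S x)) (U : ℤ → Finset (Finset ℤ)) (L : Finset ℤ)
    (η η' : Config S) : Prop :=
  ∃ x ∈ L, Constraint I U x η ∧ ∀ y : ℤ, y ≠ x → η' y = η y

/-- `η` and `η'` belong to the same irreducible component of the KCM on volume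
`L` (connected component of the transition graph on configurations). -/
def Reach (I : ∀ x : ℤ, Set (S x)) (U : ℤ → Finset (Finset ℤ)) (L : Finset ℤ)
    (η η' : Config S) : Prop :=
  Relation.ReflTransGen (fun ζ ζ' => Step I U L ζ ζ' ∨ Step I U L ζ' ζ) η η'

/-- The closure `{η}_L^ω`: the set of sites of `L` whose state can eventually
be updated starting from `η`. -/
def closure (I : ∀ x : ℤ, Set (S x)) (U : ℤ → Finset (Finset ℤ)) (L : Finset ℤ)
    (η : Config S) : Set ℤ :=
  {x | x ∈ L ∧ ∃ η', Reach I U L η η' ∧ Constraint I U x η'}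

/-- Replace the states of `η` inside `Λ` by `ξ`. -/
def glue (Λ : Finset ℤ) (η : Config S) (ξ : ∀ x : {y : ℤ // y ∈ Λ}, S x.1) :
    Config S :=
  fun x => if h : x ∈ Λ then ξ ⟨x, h⟩ else η x

variable [∀ x, Fintype (S x)]

/-- Expectation of `f` when the states of `η` inside `Λ` are resampled from the
product of the measures `π x`, `x ∈ Λ`, conditioned on the event `P`. -/
noncomputable def expOn (π : ∀ x : ℤ, S x → ℝ) (Λ : Finset ℤ)
    (P : Config S → Prop) (η : Config S) (f : Config S → ℝ) : ℝ :=
  (∑ ξ : ∀ x : {y : ℤ // y ∈ Λ}, S x.1,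
      if P (glue Λ η ξ) then (∏ x : {y : ℤ // y ∈ Λ}, π x.1 (ξ x)) * f (glue Λ η ξ) else 0) /
  (∑ ξ : ∀ x : {y : ℤ // y ∈ Λ}, S x.1,
      if P (glue Λ η ξ) then (∏ x : {y : ℤ // y ∈ Λ}, π x.1 (ξ x)) else 0)

/-- Variance of `f` when the states of `η` inside `Λ` are resampled from the
product of the measures `π x`, `x ∈ Λ`, conditioned on the event `P`. -/
noncomputable def varOn (π : ∀ x : ℤ, S x → ℝ) (Λ : Finset ℤ)
    (P : Config S → Prop) (η : Config S) (f : Config S → ℝ) : ℝ :=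
  expOn π Λ P η (fun ζ => (f ζ - expOn π Λ P η f) ^ 2)


end KCM

/-!
A site of the closure can be updated to an infected state from every
configuration reachable from `η`, because infecting sites only helps
constraints; doing this for all sites of the closure at once shows that the
closure is bootstrap closed. Conversely, when no rule of `x` contains `x`, a
transition at `x` is reversible and its constraint reads only other sites, so
along any path from `η` the configuration agrees with `η` off a bootstrap closed
set `A`, which forces every updated site into `A`.
-/

namespace KCM

variable {S : ℤ → Type}

def IsBootstrapClosed (I : ∀ x : ℤ, Set (S x)) (U : ℤ → Finset (Finset ℤ)) (L : Finset ℤ)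
    (η : Config S) (A : Set ℤ) : Prop :=
  ∀ y ∈ L, (∃ u ∈ U y, ∀ z ∈ u, η z ∈ I z ∨ z ∈ A) → y ∈ A

section

variable {I : ∀ x : ℤ, Set (S x)} {U : ℤ → Finset (Finset ℤ)} {L : Finset ℤ}

theorem Reach.symm {a b : Config S} (h : Reach I U L a b) : Reach I U L b a := by
  have : Std.Symm fun ζ ζ' : Config S => Step I U L ζ ζ' ∨ Step I U L ζ' ζ :=
    ⟨fun _ _ => Or.symm⟩
  exact Std.Symm.symm (r := Relation.ReflTransGen _) _ _ h

theorem Constraint.update_of_mem {w x : ℤ} {s : S x} {ζ : Config S}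
    (h : Constraint I U w ζ) (hs : s ∈ I x) :
    Constraint I U w (Function.update ζ x s) := by
  obtain ⟨u, hu, hinf⟩ := h
  refine ⟨u, hu, fun y hy => ?_⟩
  rcases eq_or_ne y x with rfl | hyx
  · simpa using hs
  · simpa [hyx] using hinf y hy

/-- The result is only `Reach`: a transition at `x` itself collapses. -/
theorem Step.update_of_mem {x : ℤ} {s : S x} {a b : Config S}
    (h : Step I U L a b) (hs : s ∈ I x) :
    Reach I U L (Function.update a x s) (Function.update b x s) := by
  obtain ⟨w, hwL, hc, hab⟩ := h
  rcases eq_or_ne w x with rfl | hwx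
  · have hcollapse : Function.update a w s = Function.update b w s := by
      funext y
      rcases eq_or_ne y w with rfl | hyw
      · simp
      · simp [hyw, hab y hyw]
    rw [hcollapse]
    exact .refl
  · refine .single (.inl ⟨w, hwL, hc.update_of_mem hs, fun y hyw => ?_⟩)
    rcases eq_or_ne y x with rfl | hyx
    · simp
    · simp [hyx, hab y hyw]

theorem Reach.update_of_mem {x : ℤ} {s : S x} {a b : Config S}
    (h : Reach I U L a b) (hs : s ∈ I x) :
    Reach I U L (Function.update a x s) (Function.update b x s) :=
  Relation.ReflTransGen.lift' (fun ζ => Function.update ζ x s)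
    (fun c d (hcd : Step I U L c d ∨ Step I U L d c) =>
      hcd.elim (·.update_of_mem hs) (fun hdc => (hdc.update_of_mem hs).symm)) _ _ h

/-- Once `x` has been updated from `η'`, replay the path `η' ⟶ ζ` with `x`
kept infected. -/
theorem Reach.update_of_mem_closure {η ζ : Config S} {x : ℤ} {s : S x}
    (hζ : Reach I U L η ζ) (hx : x ∈ closure I U L η) (hs : s ∈ I x) :
    Reach I U L η (Function.update ζ x s) := by
  obtain ⟨hxL, η', hη', hc⟩ := hx
  have hflip : Reach I U L η' (Function.update η' x s) :=
    .single (.inl ⟨x, hxL, hc, fun _ hy => Function.update_of_ne hy _ _⟩)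
  have hη'ζ : Reach I U L η' ζ := hη'.symm.trans hζ
  exact hη'.trans (hflip.trans (hη'ζ.update_of_mem hs))

theorem Reach.piecewise_of_subset_closure {η ξ : Config S} {t : Finset ℤ}
    (ht : ∀ x ∈ t, x ∈ closure I U L η) (hξ : ∀ x ∈ t, ξ x ∈ I x) :
    Reach I U L η (t.piecewise ξ η) := by
  induction t using Finset.induction_on with
  | empty => rw [Finset.piecewise_empty]; exact .refl
  | insert a t _ ih =>
    rw [Finset.piecewise_insert]
    have ih := ih (fun x hx => ht x (by simp [hx])) (fun x hx => hξ x (by simp [hx]))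
    exact ih.update_of_mem_closure (ht a (by simp)) (hξ a (by simp))

theorem isBootstrapClosed_closure {η : Config S} (hI : ∀ x, (I x).Nonempty) :
    IsBootstrapClosed I U L η (closure I U L η) := by
  rintro y hyL ⟨u, hu, hinf⟩
  choose ξ hξ using hI
  let t := u.filter (· ∈ closure I U L η)
  have hreach : Reach I U L η (t.piecewise ξ η) :=
    Reach.piecewise_of_subset_closure (fun x hx => (Finset.mem_filter.1 hx).2) (fun x _ => hξ x)
  refine ⟨hyL, _, hreach, u, hu, fun z hz => ?_⟩
  by_cases hzc : z ∈ closure I U L η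
  · rw [Finset.piecewise_eq_of_mem _ _ _ (Finset.mem_filter.2 ⟨hz, hzc⟩)]
    exact hξ z
  · rw [Finset.piecewise_eq_of_notMem _ _ _ (fun h => hzc (Finset.mem_filter.1 h).2)]
    exact (hinf z hz).resolve_right hzc

/-- The constraint at `x` does not read the state at `x`. -/
theorem Step.symm (hUx : ∀ x ∈ L, ∀ u ∈ U x, x ∉ u) {a b : Config S}
    (h : Step I U L a b) : Step I U L b a := by
  obtain ⟨x, hxL, ⟨u, hu, hinf⟩, hab⟩ := h
  refine ⟨x, hxL, ⟨u, hu, fun y hy => ?_⟩, fun y hy => (hab y hy).symm⟩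
  rw [hab y (ne_of_mem_of_not_mem hy (hUx x hxL u hu))]
  exact hinf y hy

theorem IsBootstrapClosed.mem_of_constraint {η ζ : Config S} {A : Set ℤ}
    (hA : IsBootstrapClosed I U L η A) (hζ : ∀ z ∉ A, ζ z = η z) {x : ℤ} (hxL : x ∈ L)
    (hc : Constraint I U x ζ) : x ∈ A := by
  obtain ⟨u, hu, hinf⟩ := hc
  refine hA x hxL ⟨u, hu, fun z hz => ?_⟩
  by_cases hzA : z ∈ A
  · exact .inr hzA
  · exact .inl (hζ z hzA ▸ hinf z hz)

theorem IsBootstrapClosed.eq_of_reach (hUx : ∀ x ∈ L, ∀ u ∈ U x, x ∉ u) {η ζ : Config S}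
    {A : Set ℤ} (hA : IsBootstrapClosed I U L η A) (h : Reach I U L η ζ) :
    ∀ z ∉ A, ζ z = η z := by
  induction h with
  | refl => exact fun _ _ => rfl
  | tail _ hbc ih =>
    obtain ⟨x, hxL, hc, hcb⟩ := hbc.elim id (Step.symm hUx)
    have hxA : x ∈ A := hA.mem_of_constraint ih hxL hc
    exact fun z hzA => (hcb z (ne_of_mem_of_not_mem hxA hzA).symm).trans (ih z hzA)

theorem closure_subset_of_isBootstrapClosed (hUx : ∀ x ∈ L, ∀ u ∈ U x, x ∉ u)
    {η : Config S} {A : Set ℤ} (hA : IsBootstrapClosed I U L η A) :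
    closure I U L η ⊆ A :=
  fun _ ⟨hxL, _, hreach, hc⟩ => hA.mem_of_constraint (hA.eq_of_reach hUx hreach) hxL hc

end

theorem statement16_general (S : ℤ → Type) [∀ x, Fintype (S x)] (L : Finset ℤ)
    (q : ℝ)
    (hq0 : 0 < q)
    (π : ∀ x : ℤ, S x → ℝ) (I : ∀ x : ℤ, Set (S x)) (U : ℤ → Finset (Finset ℤ))
    (hπI : ∀ x : ℤ, q ≤ ∑ s : S x, if s ∈ I x then π x s else 0)
    (hUx : ∀ x ∈ L, ∀ u ∈ U x, x ∉ u)
    (η : Config S) :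
    (closure I U L η ⊆ ↑L ∧
        ∀ y ∈ L, (∃ u ∈ U y, ∀ z ∈ u, η z ∈ I z ∨ z ∈ closure I U L η) →
          y ∈ closure I U L η) ∧
      ∀ A : Set ℤ, A ⊆ ↑L →
        (∀ y ∈ L, (∃ u ∈ U y, ∀ z ∈ u, η z ∈ I z ∨ z ∈ A) → y ∈ A) →
        closure I U L η ⊆ A := by
  have hI : ∀ x, (I x).Nonempty := fun x => by
    by_contra hempty
    have := hπI x
    simp [Set.not_nonempty_iff_eq_empty.1 hempty] at this
    linarith
  exact ⟨⟨fun _ hx => hx.1, isBootstrapClosed_closure hI⟩,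
    fun _ _ hA => closure_subset_of_isBootstrapClosed hUx hA⟩

/-- The closure coincides with the bootstrap closure of the
infection pattern: it is the smallest `A ⊆ L` such that any `y ∈ L` having a
rule contained in the union of `A` and the infected sites of `η` lies in `A`. -/
theorem statement16 (S : ℤ → Type) [∀ x, Fintype (S x)] (L : Finset ℤ)
    (q R : ℝ)
    (hq0 : 0 < q) (hq1 : q ≤ 1) (hR : 1 ≤ R)
    (π : ∀ x : ℤ, S x → ℝ) (I : ∀ x : ℤ, Set (S x)) (U : ℤ → Finset (Finset ℤ))
    (hπpos : ∀ (x : ℤ) (s : S x), 0 < π x s)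
    (hπsum : ∀ x : ℤ, ∑ s : S x, π x s = 1)
    (hπI : ∀ x : ℤ, q ≤ ∑ s : S x, if s ∈ I x then π x s else 0)
    (hUx : ∀ x ∈ L, ∀ u ∈ U x, x ∉ u)
    (hUR : ∀ x ∈ L, ∀ u ∈ U x, ∀ y ∈ u, ((|y - x| : ℤ) : ℝ) ≤ R)
    (η : Config S) :
    (closure I U L η ⊆ ↑L ∧
        ∀ y ∈ L, (∃ u ∈ U y, ∀ z ∈ u, η z ∈ I z ∨ z ∈ closure I U L η) →
          y ∈ closure I U L η) ∧
      ∀ A : Set ℤ, A ⊆ ↑L →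
        (∀ y ∈ L, (∃ u ∈ U y, ∀ z ∈ u, η z ∈ I z ∨ z ∈ A) → y ∈ A) →
        closure I U L η ⊆ A :=
  statement16_general S L q hq0 π I U hπI hUx η

end KCM
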